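/- The parallel-universe tie-handling (PUT) version of Baldwin violates positive involvement: there exists a profile P, a candidate x ∈ BaldwinPUT(P), and a profile P' obtained from P by adding one new voter whose ballot ranks x in first place, such that x ∉ BaldwinPUT(P'). (A witness: P is the 6-voter profile on candidates {a,b,c,d} with ballots badc, cbda, cbda, dacb, dbac, acbd, in which BaldwinPUT(P) = {c}; adding a voter with ballot cabd yields BaldwinPUT(P') = {a}.) -/
import Mathlib


open scoped Classical

/-- `r` is a strict linear order on the finite set `X`, relating only members of `X`. -/
def IsLinOn (X : Finset ℕ) (r : ℕ → ℕ → Prop) : Prop :=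
  (∀ a b, r a b → a ∈ X ∧ b ∈ X) ∧
  (∀ a, ¬ r a a) ∧
  (∀ a b c, r a b → r b c → r a c) ∧
  (∀ a ∈ X, ∀ b ∈ X, a ≠ b → r a b ∨ r b a)

/-- A profile assigns to each voter in a nonempty finite set of voters a strict linear
order (ballot) on a nonempty finite set of candidates.  Voters and candidates are both
drawn from the infinite set `ℕ`. -/
structure Profile where
  voters : Finset ℕ
  cands : Finset ℕ
  voters_nonempty : voters.Nonempty
  cands_nonempty : cands.Nonempty
  ballot : ℕ → ℕ → ℕ → Prop
  ballot_lin : ∀ i ∈ voters, IsLinOn cands (ballot i)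

/-- `F` is a voting method: it assigns to each profile a nonempty set of winners
among the candidates of the profile. -/
def VotingMethod (F : Profile → Finset ℕ) : Prop :=
  ∀ P : Profile, (F P).Nonempty ∧ F P ⊆ P.cands

/-- The ballot `r` ranks `x` in first place among the candidates in `X`. -/
def RanksFirst (X : Finset ℕ) (r : ℕ → ℕ → Prop) (x : ℕ) : Prop :=
  x ∈ X ∧ ∀ y ∈ X, y ≠ x → r x y

/-- `P'` is obtained from `P` by adding one new voter `j` whose ballot ranks `x` in
first place. -/
def AddVoter (P P' : Profile) (j x : ℕ) : Prop :=
  P'.cands = P.cands ∧ j ∉ P.voters ∧ P'.voters = insert j P.voters ∧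
  (∀ i ∈ P.voters, ∀ a b, (P'.ballot i a b ↔ P.ballot i a b)) ∧
  RanksFirst P.cands (P'.ballot j) x

/-- `F` satisfies positive involvement (PI). -/
def SatisfiesPI (F : Profile → Finset ℕ) : Prop :=
  ∀ (P P' : Profile) (j x : ℕ), x ∈ F P → AddVoter P P' j x → x ∈ F P'

/-- The Borda score of `x` in the profile `P` restricted to the candidates in `Y`
(for each ballot, the number of candidates in `Y` ranked below `x`, which equals
`|Y| - Rank(x)`). -/
noncomputable def bordaInY (P : Profile) (Y : Finset ℕ) (x : ℕ) : ℕ :=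
  ∑ i ∈ P.voters, (Y.filter (fun b => P.ballot i x b)).card

/-- `x` has minimal Borda score among the candidates in `Y` (in the restricted profile). -/
noncomputable def minBorda (P : Profile) (Y : Finset ℕ) (x : ℕ) : Prop :=
  x ∈ Y ∧ ∀ y ∈ Y, bordaInY P Y x ≤ bordaInY P Y y

/-- The `n`-th stage of the Baldwin`_L` elimination process: while more than one
candidate remains, remove the `L`-minimal candidate among those with the smallest
Borda score in the restricted profile. -/
noncomputable def baldwinLStage (P : Profile) (L : ℕ → ℕ → Prop) : ℕ → Finset ℕ
  | 0 => P.cands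
  | n + 1 =>
    let Y := baldwinLStage P L n
    if Y.card ≤ 1 then Y
    else Y \ (Y.filter (fun x => minBorda P Y x ∧
      ∀ y, minBorda P Y y → y ≠ x → L x y))

/-- The PUT (parallel-universe tie-handling) version of Baldwin: `x` wins in `P` iff
`x` wins according to Baldwin`_L` for some linear order `L` on the candidates. -/
noncomputable def BaldwinPUT (P : Profile) : Finset ℕ :=
  P.cands.filter (fun x =>
    ∃ L : ℕ → ℕ → Prop, IsLinOn P.cands L ∧ x ∈ baldwinLStage P L P.cands.card)


namespace BPI

/-- rank of candidate `c` on voter `i`'s ballot (smaller = better). -/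
def pos (i c : ℕ) : ℕ :=
  match i, c with
  | 0,0=>1 | 0,1=>0 | 0,2=>3 | 0,3=>2
  | 1,0=>3 | 1,1=>1 | 1,2=>0 | 1,3=>2
  | 2,0=>3 | 2,1=>1 | 2,2=>0 | 2,3=>2
  | 3,0=>1 | 3,1=>3 | 3,2=>2 | 3,3=>0
  | 4,0=>2 | 4,1=>1 | 4,2=>3 | 4,3=>0
  | 5,0=>0 | 5,1=>2 | 5,2=>1 | 5,3=>3
  | 6,0=>1 | 6,1=>2 | 6,2=>0 | 6,3=>3
  | _,c => c

def C : Finset ℕ := {0,1,2,3}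

def bal (i a b : ℕ) : Prop := a ∈ C ∧ b ∈ C ∧ pos i a < pos i b

instance (i a b : ℕ) : Decidable (bal i a b) :=
  inferInstanceAs (Decidable (_ ∧ _ ∧ _))

lemma linOn_of (f : ℕ → ℕ) (hinj : ∀ a ∈ C, ∀ b ∈ C, a ≠ b → f a ≠ f b) :
    IsLinOn C (fun a b => a ∈ C ∧ b ∈ C ∧ f a < f b) := by
  refine ⟨fun a b h => ⟨h.1, h.2.1⟩, fun a h => lt_irrefl _ h.2.2,
    fun a b c h1 h2 => ⟨h1.1, h2.2.1, h1.2.2.trans h2.2.2⟩, fun a ha b hb hab => ?_⟩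
  rcases lt_or_gt_of_ne (hinj a ha b hb hab) with h | h
  · exact Or.inl ⟨ha, hb, h⟩
  · exact Or.inr ⟨hb, ha, h⟩

lemma bal_lin (i : ℕ) (hinj : ∀ a ∈ C, ∀ b ∈ C, a ≠ b → pos i a ≠ pos i b) :
    IsLinOn C (bal i) := linOn_of (pos i) hinj

def V6 : Finset ℕ := {0,1,2,3,4,5}
def V7 : Finset ℕ := insert 6 V6

noncomputable def Pr : Profile :=
  ⟨V6, C, ⟨0, by decide⟩, ⟨0, by decide⟩, bal, by
    intro i hi
    simp only [V6, Finset.mem_insert, Finset.mem_singleton] at hi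
    rcases hi with rfl|rfl|rfl|rfl|rfl|rfl <;> exact bal_lin _ (by decide)⟩

noncomputable def Pr' : Profile :=
  ⟨V7, C, ⟨6, by decide⟩, ⟨0, by decide⟩, bal, by
    intro i hi
    simp only [V7, V6, Finset.mem_insert, Finset.mem_singleton] at hi
    rcases hi with rfl|rfl|rfl|rfl|rfl|rfl|rfl <;> exact bal_lin _ (by decide)⟩

/-- computable Borda score -/
def bordaC (V Y : Finset ℕ) (x : ℕ) : ℕ := ∑ i ∈ V, (Y.filter fun b => bal i x b).card

lemma borda_eq (Q : Profile) (V : Finset ℕ) (hV : Q.voters = V) (hb : Q.ballot = bal)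
    (Y : Finset ℕ) (x : ℕ) : bordaInY Q Y x = bordaC V Y x := by
  subst hV
  simp only [bordaInY, bordaC, hb, Finset.filter_congr_decidable]

lemma minBorda_iff (Q : Profile) (V : Finset ℕ) (hV : Q.voters = V) (hb : Q.ballot = bal)
    (Y : Finset ℕ) (x : ℕ) :
    minBorda Q Y x ↔ x ∈ Y ∧ ∀ y ∈ Y, bordaC V Y x ≤ bordaC V Y y := by
  unfold minBorda
  simp only [borda_eq Q V hV hb]

lemma filter_min_eq (Q : Profile) (L : ℕ → ℕ → Prop) (Y : Finset ℕ) (m : ℕ)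
    (h : ∀ x, minBorda Q Y x ↔ x = m) (hm : m ∈ Y) :
    (Y.filter (fun x => minBorda Q Y x ∧
      ∀ y, minBorda Q Y y → y ≠ x → L x y)) = {m} := by
  ext x
  simp only [Finset.mem_filter, Finset.mem_singleton, h]
  constructor
  · rintro ⟨-, rfl, -⟩; rfl
  · rintro rfl
    exact ⟨hm, rfl, fun y hy hne => absurd hy hne⟩

lemma stage_succ (Q : Profile) (L : ℕ → ℕ → Prop) (n : ℕ) (Y : Finset ℕ)
    (hY : baldwinLStage Q L n = Y) (hcard : ¬ Y.card ≤ 1) (m : ℕ) (hm : m ∈ Y)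
    (h : ∀ x, minBorda Q Y x ↔ x = m) :
    baldwinLStage Q L (n+1) = Y \ {m} := by
  rw [baldwinLStage]
  simp only [hY, if_neg hcard, filter_min_eq Q L Y m h hm]

lemma stage_stay (Q : Profile) (L : ℕ → ℕ → Prop) (n : ℕ) (Y : Finset ℕ)
    (hY : baldwinLStage Q L n = Y) (hcard : Y.card ≤ 1) :
    baldwinLStage Q L (n+1) = Y := by
  rw [baldwinLStage]
  simp only [hY, if_pos hcard]

end BPI

open BPI in
theorem baldwinPUT_violates_PI :
    ∃ (P P' : Profile) (j x : ℕ),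
      x ∈ BaldwinPUT P ∧ AddVoter P P' j x ∧ x ∉ BaldwinPUT P' := by
  refine ⟨Pr, Pr', 6, 2, ?_, ?_, ?_⟩
  · -- 2 wins in Pr for L = natural order
    have hcands : Pr.cands = C := rfl
    have hcard : Pr.cands.card = 4 := by decide
    -- unique-min facts
    have h0 : ∀ x, minBorda Pr ({0,1,2,3} : Finset ℕ) x ↔ x = 0 := by
      intro x
      rw [minBorda_iff Pr V6 rfl rfl]
      constructor
      · rintro ⟨hx, hall⟩
        simp only [Finset.mem_insert, Finset.mem_singleton] at hx
        rcases hx with rfl|rfl|rfl|rfl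
        · rfl
        · exact absurd (hall 0 (by decide)) (by decide)
        · exact absurd (hall 0 (by decide)) (by decide)
        · exact absurd (hall 0 (by decide)) (by decide)
      · rintro rfl; exact ⟨by decide, by decide⟩
    have h1 : ∀ x, minBorda Pr ({1,2,3} : Finset ℕ) x ↔ x = 3 := by
      intro x
      rw [minBorda_iff Pr V6 rfl rfl]
      constructor
      · rintro ⟨hx, hall⟩
        simp only [Finset.mem_insert, Finset.mem_singleton] at hx
        rcases hx with rfl|rfl|rfl
        · exact absurd (hall 3 (by decide)) (by decide)
        · exact absurd (hall 3 (by decide)) (by decide)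
        · rfl
      · rintro rfl; exact ⟨by decide, by decide⟩
    have h2 : ∀ x, minBorda Pr ({1,2} : Finset ℕ) x ↔ x = 1 := by
      intro x
      rw [minBorda_iff Pr V6 rfl rfl]
      constructor
      · rintro ⟨hx, hall⟩
        simp only [Finset.mem_insert, Finset.mem_singleton] at hx
        rcases hx with rfl|rfl
        · rfl
        · exact absurd (hall 1 (by decide)) (by decide)
      · rintro rfl; exact ⟨by decide, by decide⟩
    set L : ℕ → ℕ → Prop := fun a b => a ∈ C ∧ b ∈ C ∧ id a < id b with hL
    have hLlin : IsLinOn C L := linOn_of id (by decide)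
    have s0 : baldwinLStage Pr L 0 = ({0,1,2,3} : Finset ℕ) := rfl
    have s1 : baldwinLStage Pr L 1 = ({1,2,3} : Finset ℕ) := by
      rw [stage_succ Pr L 0 _ s0 (by decide) 0 (by decide) h0]; decide
    have s2 : baldwinLStage Pr L 2 = ({1,2} : Finset ℕ) := by
      rw [stage_succ Pr L 1 _ s1 (by decide) 3 (by decide) h1]; decide
    have s3 : baldwinLStage Pr L 3 = ({2} : Finset ℕ) := by
      rw [stage_succ Pr L 2 _ s2 (by decide) 1 (by decide) h2]; decide
    have s4 : baldwinLStage Pr L 4 = ({2} : Finset ℕ) :=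
      stage_stay Pr L 3 _ s3 (by decide)
    rw [BaldwinPUT, Finset.mem_filter]
    exact ⟨by decide, L, hLlin, by rw [hcard, s4]; decide⟩
  · -- AddVoter
    refine ⟨rfl, by decide, rfl, fun i _ a b => Iff.rfl, by decide, ?_⟩
    intro y hy hne
    have : y ∈ C := hy
    fin_cases this <;> first | (exact absurd rfl hne) | (show bal 6 2 _; decide)
  · -- 2 loses in Pr' for every L
    intro hmem
    rw [BaldwinPUT, Finset.mem_filter] at hmem
    obtain ⟨-, L, -, hwin⟩ := hmem
    have hcard : Pr'.cands.card = 4 := by decide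
    rw [hcard] at hwin
    have h0 : ∀ x, minBorda Pr' ({0,1,2,3} : Finset ℕ) x ↔ x = 3 := by
      intro x
      rw [minBorda_iff Pr' V7 rfl rfl]
      constructor
      · rintro ⟨hx, hall⟩
        simp only [Finset.mem_insert, Finset.mem_singleton] at hx
        rcases hx with rfl|rfl|rfl|rfl
        · exact absurd (hall 3 (by decide)) (by decide)
        · exact absurd (hall 3 (by decide)) (by decide)
        · exact absurd (hall 3 (by decide)) (by decide)
        · rfl
      · rintro rfl; exact ⟨by decide, by decide⟩
    have h1 : ∀ x, minBorda Pr' ({0,1,2} : Finset ℕ) x ↔ x = 1 := by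
      intro x
      rw [minBorda_iff Pr' V7 rfl rfl]
      constructor
      · rintro ⟨hx, hall⟩
        simp only [Finset.mem_insert, Finset.mem_singleton] at hx
        rcases hx with rfl|rfl|rfl
        · exact absurd (hall 1 (by decide)) (by decide)
        · rfl
        · exact absurd (hall 1 (by decide)) (by decide)
      · rintro rfl; exact ⟨by decide, by decide⟩
    have h2 : ∀ x, minBorda Pr' ({0,2} : Finset ℕ) x ↔ x = 2 := by
      intro x
      rw [minBorda_iff Pr' V7 rfl rfl]
      constructor
      · rintro ⟨hx, hall⟩
        simp only [Finset.mem_insert, Finset.mem_singleton] at hx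
        rcases hx with rfl|rfl
        · exact absurd (hall 2 (by decide)) (by decide)
        · rfl
      · rintro rfl; exact ⟨by decide, by decide⟩
    have s0 : baldwinLStage Pr' L 0 = ({0,1,2,3} : Finset ℕ) := rfl
    have s1 : baldwinLStage Pr' L 1 = ({0,1,2} : Finset ℕ) := by
      rw [stage_succ Pr' L 0 _ s0 (by decide) 3 (by decide) h0]; decide
    have s2 : baldwinLStage Pr' L 2 = ({0,2} : Finset ℕ) := by
      rw [stage_succ Pr' L 1 _ s1 (by decide) 1 (by decide) h1]; decide
    have s3 : baldwinLStage Pr' L 3 = ({0} : Finset ℕ) := by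
      rw [stage_succ Pr' L 2 _ s2 (by decide) 2 (by decide) h2]; decide
    have s4 : baldwinLStage Pr' L 4 = ({0} : Finset ℕ) :=
      stage_stay Pr' L 3 _ s3 (by decide)
    rw [s4] at hwin
    exact absurd hwin (by decide)
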